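/- Let D be a 4×4 complex matrix (entries D_{ij}, 0-based indexing, row i and column j). The linear map x ↦ D·x on ℂ⁴ is a derivation of the 4-dimensional Mock-Lie algebra A_{1,2} ⊕ A_{1,2} if and only if D_{01} = D_{02} = D_{03} = 0, D_{13} = 0, D_{20} = 0, D_{21} = 0, D_{23} = 0, D_{31} = 0, D_{11} = 2·D_{00}, and D_{33} = 2·D_{22}. Equivalently, the derivations are exactly the linear maps whose matrix relative to the basis (e_1, e_2, e_3, e_4) has the form [[d_{11}, 0, 0, 0], [d_{21}, 2d_{11}, d_{23}, 0], [0, 0, d_{33}, 0], [d_{41}, 0, d_{43}, 2d_{33}]]. -/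

import Mathlib

/-!
Testing the Leibniz rule on the pairs of basis vectors `(e₀, e₀)`, `(e₂, e₂)` and `(e₀, e₂)`
pins down columns `1` and `3` of `D` (the images of `e₀ · e₀ = e₁` and `e₂ · e₂ = e₃`) and,
since `e₀ · e₂ = 0`, forces `D 0 2 = D 2 0 = 0`. Conversely, for a matrix of this shape both
sides of the Leibniz rule agree coordinatewise as polynomials in `x` and `y`.
-/

/-- The product of the 4-dimensional Mock-Lie algebra `A_{1,2} ⊕ A_{1,2}`:
`e_1 · e_1 = e_2`, `e_3 · e_3 = e_4`, all other products of basis vectors zero. -/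
def mulA12A12 (x y : Fin 4 → ℂ) : Fin 4 → ℂ := ![0, x 0 * y 0, 0, x 2 * y 2]

open Matrix

def IsDerivationA12A12 (D : Matrix (Fin 4) (Fin 4) ℂ) : Prop :=
  ∀ x y : Fin 4 → ℂ, D *ᵥ mulA12A12 x y = mulA12A12 (D *ᵥ x) y + mulA12A12 x (D *ᵥ y)

theorem mulA12A12_single_zero_single_zero :
    mulA12A12 (Pi.single 0 1) (Pi.single 0 1) = Pi.single 1 1 := by
  ext i; fin_cases i <;> simp [mulA12A12]

theorem mulA12A12_single_two_single_two :
    mulA12A12 (Pi.single 2 1) (Pi.single 2 1) = Pi.single 3 1 := by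
  ext i; fin_cases i <;> simp [mulA12A12]

theorem mulA12A12_single_zero_single_two : mulA12A12 (Pi.single 0 1) (Pi.single 2 1) = 0 := by
  ext i; fin_cases i <;> simp [mulA12A12]

namespace IsDerivationA12A12

variable {D : Matrix (Fin 4) (Fin 4) ℂ}

theorem col_one_eq (h : IsDerivationA12A12 D) :
    D 0 1 = 0 ∧ D 1 1 = 2 * D 0 0 ∧ D 2 1 = 0 ∧ D 3 1 = 0 := by
  have leibniz := h (Pi.single 0 1) (Pi.single 0 1)
  rw [mulA12A12_single_zero_single_zero, mulVec_single_one, mulVec_single_one] at leibniz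
  simpa [funext_iff, Fin.forall_fin_succ, mulA12A12, two_mul] using leibniz

theorem col_three_eq (h : IsDerivationA12A12 D) :
    D 0 3 = 0 ∧ D 1 3 = 0 ∧ D 2 3 = 0 ∧ D 3 3 = 2 * D 2 2 := by
  have leibniz := h (Pi.single 2 1) (Pi.single 2 1)
  rw [mulA12A12_single_two_single_two, mulVec_single_one, mulVec_single_one] at leibniz
  simpa [funext_iff, Fin.forall_fin_succ, mulA12A12, two_mul] using leibniz

theorem entry_zero_two_eq_zero_and_entry_two_zero_eq_zero (h : IsDerivationA12A12 D) :
    D 0 2 = 0 ∧ D 2 0 = 0 := by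
  have leibniz := h (Pi.single 0 1) (Pi.single 2 1)
  rw [mulA12A12_single_zero_single_two, mulVec_zero, mulVec_single_one, mulVec_single_one]
    at leibniz
  simpa [funext_iff, Fin.forall_fin_succ, mulA12A12, eq_comm] using leibniz

end IsDerivationA12A12

/-- `x ↦ D · x` is a derivation of `A_{1,2} ⊕ A_{1,2}` iff
`D 0 1 = D 0 2 = D 0 3 = 0`, `D 1 3 = 0`, `D 2 0 = 0`, `D 2 1 = 0`, `D 2 3 = 0`,
`D 3 1 = 0`, `D 1 1 = 2 * D 0 0` and `D 3 3 = 2 * D 2 2`. -/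
theorem derivation_A12_A12_iff (D : Matrix (Fin 4) (Fin 4) ℂ) :
    (∀ x y : Fin 4 → ℂ,
        D.mulVec (mulA12A12 x y) = mulA12A12 (D.mulVec x) y + mulA12A12 x (D.mulVec y)) ↔
      (D 0 1 = 0 ∧ D 0 2 = 0 ∧ D 0 3 = 0 ∧ D 1 3 = 0 ∧ D 2 0 = 0 ∧ D 2 1 = 0 ∧
        D 2 3 = 0 ∧ D 3 1 = 0 ∧ D 1 1 = 2 * D 0 0 ∧ D 3 3 = 2 * D 2 2) := by
  constructor
  · intro h
    obtain ⟨h01, h11, h21, h31⟩ := IsDerivationA12A12.col_one_eq h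
    obtain ⟨h03, h13, h23, h33⟩ := IsDerivationA12A12.col_three_eq h
    obtain ⟨h02, h20⟩ := IsDerivationA12A12.entry_zero_two_eq_zero_and_entry_two_zero_eq_zero h
    exact ⟨h01, h02, h03, h13, h20, h21, h23, h31, h11, h33⟩
  · rintro ⟨h01, h02, h03, h13, h20, h21, h23, h31, h11, h33⟩ x y
    ext i
    fin_cases i <;>
      simp [mulA12A12, mulVec, dotProduct, Fin.sum_univ_four,
        h01, h02, h03, h13, h20, h21, h23, h31, h11, h33] <;> ring
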